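/- For every prime number p, the quaternion algebra over the p-adic field ℚ_[p] with basis 1, x, y, xy satisfying x² = −3, y² = 5, yx = −xy (i.e., Mathlib's QuaternionAlgebra ℚ_[p] (−3) 5) is isomorphic as a ℚ_[p]-algebra to the algebra of 2×2 matrices over ℚ_[p] if and only if p ≠ 3 and p ≠ 5. -/

import Mathlib

/-!
If `p ∉ {3, 5}`, the equation `x² + 3y² = 5` has a solution in `ℚ_[p]`: for odd `p` solve it
modulo `p` (a sum of two quadratics in one variable each takes every value on a finite field) and
lift with Hensel's lemma, and for `p = 2` use that `-7 ≡ 1 mod 8` is a square. Such a solution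
realises `i ↦ [[0, -3], [1, 0]]`, `j ↦ [[x, 3y], [y, -x]]` as a basis of `M₂(ℚ_[p])`.

For `p = 3, 5` the reduced norm `r² + 3s² - 5t² - 15u²` can be written as
`N(x, y) - p c N(z, w)` with `N(x, y) = x² - a y²` anisotropic modulo `p` and `c` a unit.
A zero of it then has all coordinates divisible by `p` and, after dividing by `p`, is again a zero,
so only the trivial zero exists. With an anisotropic norm `q * star q`, no nonzero quaternion
squares to zero, whereas `M₂` has nonzero nilpotents.
-/

open Quaternion

def quaternionNormForm {R : Type*} [CommRing R] (a b x y z w : R) : R :=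
  x ^ 2 - a * y ^ 2 - b * (z ^ 2 - a * w ^ 2)

theorem quaternionNormForm_comm {R : Type*} [CommRing R] (a b x y z w : R) :
    quaternionNormForm a b x y z w = quaternionNormForm b a x z y w := by
  unfold quaternionNormForm; ring

namespace QuaternionAlgebra

variable {K : Type*} [Field K] {a b : K}

theorem re_mul_star (q : ℍ[K,a,b]) :
    (q * star q).re = quaternionNormForm a b q.re q.imI q.imJ q.imK := by
  simp [quaternionNormForm]; ring

theorem isEmpty_algEquiv_matrix_of_anisotropic
    (h : ∀ q : ℍ[K,a,b], (q * star q).re = 0 → q = 0) :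
    IsEmpty (ℍ[K,a,b] ≃ₐ[K] Matrix (Fin 2) (Fin 2) K) := by
  refine ⟨fun e => ?_⟩
  set q := e.symm (Matrix.single 0 1 1)
  have hq : q ≠ 0 := EmbeddingLike.map_ne_zero_iff.mpr fun h0 => by simpa using congrFun₂ h0 0 1
  have hqq : q * q = 0 := by simp [q, ← map_mul]
  have hnorm : (q * star q).re • q = 0 := by
    rw [← mul_coe_eq_smul, ← mul_star_eq_coe, ← mul_assoc, hqq, zero_mul]
  exact hq (h q ((smul_eq_zero.mp hnorm).resolve_right hq))

def matrixBasis {x y : K} (h : x ^ 2 - a * y ^ 2 = b) :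
    Basis (Matrix (Fin 2) (Fin 2) K) a 0 b where
  i := !![0, a; 1, 0]
  j := !![x, -a * y; y, -x]
  k := !![a * y, -a * x; x, -a * y]
  i_mul_i := by ext i j; fin_cases i <;> fin_cases j <;> simp
  j_mul_j := by
    subst h; ext i j; fin_cases i <;> fin_cases j <;> simp <;> ring
  i_mul_j := by ext i j; fin_cases i <;> fin_cases j <;> simp
  j_mul_i := by ext i j; fin_cases i <;> fin_cases j <;> simp <;> ring

theorem matrixBasis_lift_surjective {x y : K} (h2 : (2 : K) ≠ 0) (ha : a ≠ 0) (hb : b ≠ 0)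
    (h : x ^ 2 - a * y ^ 2 = b) : Function.Surjective (matrixBasis h).lift := by
  intro m
  set d := (m 0 0 - m 1 1) / 2
  set e := (m 1 0 - m 0 1 / a) / 2
  -- `t x + a u y = d` and `t y + u x = e`, a linear system of determinant `x² - a y² = b`
  refine ⟨⟨(m 0 0 + m 1 1) / 2, (m 1 0 + m 0 1 / a) / 2, (x * d - a * y * e) / b,
    (x * e - y * d) / b⟩, ?_⟩
  subst h
  ext i j
  fin_cases i <;> fin_cases j <;>
    simp [Basis.lift, matrixBasis, Matrix.algebraMap_matrix_apply, d, e] <;> field_simp <;> ring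

theorem nonempty_algEquiv_matrix_of_sq_sub_mul_sq_eq {x y : K} (h2 : (2 : K) ≠ 0) (ha : a ≠ 0)
    (hb : b ≠ 0) (h : x ^ 2 - a * y ^ 2 = b) :
    Nonempty (ℍ[K,a,b] ≃ₐ[K] Matrix (Fin 2) (Fin 2) K) := by
  have hsurj := matrixBasis_lift_surjective h2 ha hb h
  have hinj : Function.Injective (matrixBasis h).liftHom :=
    (LinearMap.injective_iff_surjective_of_finrank_eq_finrank
      (by simp [finrank_eq_four, Module.finrank_matrix])
      (f := (matrixBasis h).liftHom.toLinearMap)).mpr hsurj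
  exact ⟨AlgEquiv.ofBijective _ ⟨hinj, hsurj⟩⟩

end QuaternionAlgebra

theorem ZMod.natCast_ne_zero_of_prime {p q : ℕ} [hp : Fact p.Prime] (hq : q.Prime) (hpq : p ≠ q) :
    (q : ZMod p) ≠ 0 := by
  rw [Ne, ZMod.natCast_eq_zero_iff]
  exact fun h => hpq ((Nat.prime_dvd_prime_iff_eq hp.out hq).mp h)

theorem FiniteField.exists_sq_add_mul_sq_eq {F : Type*} [Field F] [Fintype F]
    (hF : Fintype.card F % 2 = 1) {c : F} (hc : c ≠ 0) (d : F) :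
    ∃ x y : F, x ^ 2 + c * y ^ 2 = d := by
  obtain ⟨x, y, h⟩ := exists_root_sum_quadratic (Polynomial.degree_X_pow_sub_C two_pos d)
    (Polynomial.degree_C_mul_X_pow 2 hc) hF
  exact ⟨x, y, by simpa [sub_add_eq_add_sub, sub_eq_zero] using h⟩

namespace PadicInt

variable {p : ℕ} [Fact p.Prime]

@[simp, norm_cast]
theorem coe_ofNat (n : ℕ) [n.AtLeastTwo] : ((ofNat(n) : ℤ_[p]) : ℚ_[p]) = ofNat(n) := rfl

theorem toZMod_eq_zero_iff_dvd (x : ℤ_[p]) : toZMod x = 0 ↔ (p : ℤ_[p]) ∣ x := by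
  rw [← RingHom.mem_ker, ker_toZMod, maximalIdeal_eq_span_p, Ideal.mem_span_singleton]

theorem norm_lt_one_iff_toZMod_eq_zero (x : ℤ_[p]) : ‖x‖ < 1 ↔ toZMod x = 0 := by
  rw [norm_lt_one_iff_dvd, toZMod_eq_zero_iff_dvd]

theorem eq_zero_of_forall_pow_dvd {x : ℤ_[p]} (h : ∀ n, (p : ℤ_[p]) ^ n ∣ x) : x = 0 := by
  by_contra hx
  have := (mem_span_pow_iff_le_valuation x hx (x.valuation + 1)).mp
    (Ideal.mem_span_singleton.mpr (h _))
  omega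

theorem exists_sq_eq_of_norm_sq_sub_lt {α c : ℤ_[p]} (h : ‖α ^ 2 - c‖ < ‖2 * α‖ ^ 2) :
    ∃ z : ℤ_[p], z ^ 2 = c := by
  obtain ⟨z, hz, -⟩ := hensels_lemma (F := Polynomial.X ^ 2 - Polynomial.C c) (a := α)
    (by simpa [Polynomial.derivative_sub, one_add_one_eq_two] using h)
  exact ⟨z, by simpa [sub_eq_zero] using hz⟩

theorem exists_sq_eq_of_toZMod_eq_sq (hp : p ≠ 2) {c : ℤ_[p]} {a : ZMod p} (ha : a ≠ 0)
    (h : toZMod c = a ^ 2) : ∃ z : ℤ_[p], z ^ 2 = c := by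
  obtain ⟨α, rfl⟩ := ZMod.ringHom_surjective toZMod a
  have h2 : (2 : ZMod p) ≠ 0 := Ring.two_ne_zero (by rwa [ZMod.ringChar_zmod_n])
  have h1 : ‖α ^ 2 - c‖ < 1 := by simp [norm_lt_one_iff_toZMod_eq_zero, h]
  have h2α : ‖2 * α‖ = 1 :=
    (norm_le_one _).antisymm (not_lt.mp (by rw [norm_lt_one_iff_toZMod_eq_zero]; simp [map_ofNat, h2, ha]))
  exact exists_sq_eq_of_norm_sq_sub_lt (by rwa [h2α, one_pow])

section Descent

variable {a c : ℤ_[p]} (ha : ∀ x y : ZMod p, x ^ 2 - toZMod a * y ^ 2 = 0 → x = 0 ∧ y = 0)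
include ha

theorem dvd_of_dvd_sq_sub_mul_sq {x y : ℤ_[p]} (h : (p : ℤ_[p]) ∣ x ^ 2 - a * y ^ 2) :
    (p : ℤ_[p]) ∣ x ∧ (p : ℤ_[p]) ∣ y := by
  rw [← toZMod_eq_zero_iff_dvd, ← toZMod_eq_zero_iff_dvd]
  apply ha
  simpa using (toZMod_eq_zero_iff_dvd _).mpr h

variable (hc : toZMod c ≠ 0)
include hc

theorem exists_p_mul_of_quaternionNormForm_eq_zero {x y z w : ℤ_[p]}
    (h : quaternionNormForm a (p * c) x y z w = 0) :
    ∃ x' y' z' w', x = p * x' ∧ y = p * y' ∧ z = p * z' ∧ w = p * w' ∧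
      quaternionNormForm a (p * c) x' y' z' w' = 0 := by
  unfold quaternionNormForm at h ⊢
  have hp : (p : ℤ_[p]) ≠ 0 := prime_p.ne_zero
  obtain ⟨⟨x', rfl⟩, ⟨y', rfl⟩⟩ := dvd_of_dvd_sq_sub_mul_sq (x := x) (y := y) ha
    ⟨c * (z ^ 2 - a * w ^ 2), by linear_combination h⟩
  have hzw : (p : ℤ_[p]) * (x' ^ 2 - a * y' ^ 2) = c * (z ^ 2 - a * w ^ 2) :=
    mul_left_cancel₀ hp (by linear_combination h)
  have hc' : ¬ (p : ℤ_[p]) ∣ c := by rwa [← toZMod_eq_zero_iff_dvd]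
  obtain ⟨⟨z', rfl⟩, ⟨w', rfl⟩⟩ := dvd_of_dvd_sq_sub_mul_sq ha
    ((prime_p.dvd_or_dvd ⟨_, hzw.symm⟩).resolve_left hc')
  refine ⟨x', y', z', w', rfl, rfl, rfl, rfl, mul_left_cancel₀ hp ?_⟩
  linear_combination hzw

theorem pow_dvd_of_quaternionNormForm_eq_zero (n : ℕ) {x y z w : ℤ_[p]}
    (h : quaternionNormForm a (p * c) x y z w = 0) :
    (p : ℤ_[p]) ^ n ∣ x ∧ (p : ℤ_[p]) ^ n ∣ y ∧ (p : ℤ_[p]) ^ n ∣ z ∧ (p : ℤ_[p]) ^ n ∣ w := by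
  induction n generalizing x y z w with
  | zero => simp
  | succ n ih =>
    obtain ⟨x', y', z', w', rfl, rfl, rfl, rfl, h'⟩ :=
      exists_p_mul_of_quaternionNormForm_eq_zero ha hc h
    obtain ⟨hx, hy, hz, hw⟩ := ih h'
    simp only [pow_succ', mul_dvd_mul_left _ hx, mul_dvd_mul_left _ hy, mul_dvd_mul_left _ hz,
      mul_dvd_mul_left _ hw, and_self]

theorem eq_zero_of_quaternionNormForm_eq_zero {x y z w : ℤ_[p]}
    (h : quaternionNormForm a (p * c) x y z w = 0) : x = 0 ∧ y = 0 ∧ z = 0 ∧ w = 0 :=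
  ⟨eq_zero_of_forall_pow_dvd fun n => (pow_dvd_of_quaternionNormForm_eq_zero ha hc n h).1,
    eq_zero_of_forall_pow_dvd fun n => (pow_dvd_of_quaternionNormForm_eq_zero ha hc n h).2.1,
    eq_zero_of_forall_pow_dvd fun n => (pow_dvd_of_quaternionNormForm_eq_zero ha hc n h).2.2.1,
    eq_zero_of_forall_pow_dvd fun n => (pow_dvd_of_quaternionNormForm_eq_zero ha hc n h).2.2.2⟩

end Descent

end PadicInt

namespace Padic

variable {p : ℕ} [hp : Fact p.Prime]

theorem eq_zero_of_quaternionNormForm_eq_zero {a c : ℤ_[p]}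
    (ha : ∀ x y : ZMod p, x ^ 2 - PadicInt.toZMod a * y ^ 2 = 0 → x = 0 ∧ y = 0)
    (hc : PadicInt.toZMod c ≠ 0) {x y z w : ℚ_[p]}
    (h : quaternionNormForm (a : ℚ_[p]) (p * c) x y z w = 0) :
    x = 0 ∧ y = 0 ∧ z = 0 ∧ w = 0 := by
  obtain ⟨⟨b, hb⟩, hint⟩ :=
    IsLocalization.exist_integer_multiples_of_finite (nonZeroDivisors ℤ_[p]) ![x, y, z, w]
  obtain ⟨X, hX⟩ := hint 0
  obtain ⟨Y, hY⟩ := hint 1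
  obtain ⟨Z, hZ⟩ := hint 2
  obtain ⟨W, hW⟩ := hint 3
  simp only [PadicInt.algebraMap_apply, Matrix.cons_val, Algebra.smul_def] at hX hY hZ hW
  have hb0 : (b : ℚ_[p]) ≠ 0 := by simpa using nonZeroDivisors.ne_zero hb
  have hform : quaternionNormForm a (p * c) X Y Z W = 0 := by
    rw [← PadicInt.coe_eq_zero]
    unfold quaternionNormForm at h ⊢
    push_cast
    rw [hX, hY, hZ, hW]
    linear_combination (b : ℚ_[p]) ^ 2 * h
  have of_coe_eq_zero {V : ℤ_[p]} {v : ℚ_[p]} (hV : (V : ℚ_[p]) = b * v) (h0 : V = 0) :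
      v = 0 := by
    simpa [h0, hb0] using hV
  obtain ⟨hX0, hY0, hZ0, hW0⟩ := PadicInt.eq_zero_of_quaternionNormForm_eq_zero ha hc hform
  exact ⟨of_coe_eq_zero hX hX0, of_coe_eq_zero hY hY0, of_coe_eq_zero hZ hZ0, of_coe_eq_zero hW hW0⟩

theorem exists_sq_add_three_mul_sq_eq_five (h3 : p ≠ 3) (h5 : p ≠ 5) :
    ∃ x y : ℚ_[p], x ^ 2 + 3 * y ^ 2 = 5 := by
  rcases eq_or_ne p 2 with rfl | h2
  · obtain ⟨z, hz⟩ := PadicInt.exists_sq_eq_of_norm_sq_sub_lt (p := 2) (α := 1) (c := -7) (by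
      have h2 : ‖(2 : ℤ_[2])‖ = 2⁻¹ := by exact_mod_cast PadicInt.norm_p (p := 2)
      rw [show (1 : ℤ_[2]) ^ 2 - -7 = 2 ^ 3 by norm_num, mul_one, norm_pow, h2]
      norm_num)
    have hz' := congrArg ((↑) : ℤ_[2] → ℚ_[2]) hz
    push_cast at hz'
    exact ⟨z, 2, by linear_combination hz'⟩
  have hcard : Fintype.card (ZMod p) % 2 = 1 := by
    rw [ZMod.card]; exact hp.out.eq_two_or_odd.resolve_left h2
  have h3' : (3 : ZMod p) ≠ 0 := by exact_mod_cast ZMod.natCast_ne_zero_of_prime Nat.prime_three h3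
  have h5' : (5 : ZMod p) ≠ 0 := by exact_mod_cast ZMod.natCast_ne_zero_of_prime (by norm_num) h5
  obtain ⟨a, b, hab⟩ := FiniteField.exists_sq_add_mul_sq_eq hcard h3' 5
  rcases eq_or_ne a 0 with rfl | ha
  · -- `3 b² = 5`, so `15 = (3 b)²` is a nonzero square modulo `p`
    have hb : b ≠ 0 := by rintro rfl; exact h5' (by linear_combination -hab)
    obtain ⟨w, hw⟩ := PadicInt.exists_sq_eq_of_toZMod_eq_sq (c := 15) h2 (mul_ne_zero h3' hb)
      (by simp only [map_ofNat]; linear_combination -3 * hab)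
    have hw' := congrArg ((↑) : ℤ_[p] → ℚ_[p]) hw
    push_cast at hw'
    exact ⟨0, w / 3, by linear_combination hw' / 3⟩
  · obtain ⟨β, rfl⟩ := ZMod.ringHom_surjective PadicInt.toZMod b
    obtain ⟨z, hz⟩ := PadicInt.exists_sq_eq_of_toZMod_eq_sq (c := 5 - 3 * β ^ 2) h2 ha
      (by simp only [map_sub, map_mul, map_pow, map_ofNat]; linear_combination -hab)
    have hz' := congrArg ((↑) : ℤ_[p] → ℚ_[p]) hz
    push_cast at hz'
    exact ⟨z, β, by linear_combination hz'⟩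

end Padic

instance Nat.fact_prime_five : Fact (Nat.Prime 5) := ⟨by norm_num⟩

theorem isEmpty_algEquiv_matrix_padic_three :
    IsEmpty (ℍ[ℚ_[3],-3,5] ≃ₐ[ℚ_[3]] Matrix (Fin 2) (Fin 2) ℚ_[3]) := by
  refine QuaternionAlgebra.isEmpty_algEquiv_matrix_of_anisotropic fun q hq => ?_
  rw [QuaternionAlgebra.re_mul_star, quaternionNormForm_comm] at hq
  obtain ⟨h1, h2, h3, h4⟩ := Padic.eq_zero_of_quaternionNormForm_eq_zero (p := 3) (a := 5) (c := -1)
    (by simp only [map_ofNat]; decide) (by simp) (by norm_num at hq ⊢; exact hq)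
  exact QuaternionAlgebra.ext h1 h3 h2 h4

theorem isEmpty_algEquiv_matrix_padic_five :
    IsEmpty (ℍ[ℚ_[5],-3,5] ≃ₐ[ℚ_[5]] Matrix (Fin 2) (Fin 2) ℚ_[5]) := by
  refine QuaternionAlgebra.isEmpty_algEquiv_matrix_of_anisotropic fun q hq => ?_
  rw [QuaternionAlgebra.re_mul_star] at hq
  obtain ⟨h1, h2, h3, h4⟩ := Padic.eq_zero_of_quaternionNormForm_eq_zero (p := 5) (a := -3) (c := 1)
    (by simp only [map_neg, map_ofNat]; decide) (by simp) (by norm_num at hq ⊢; exact hq)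
  exact QuaternionAlgebra.ext h1 h2 h3 h4

theorem quaternion_disc15_split_iff (p : ℕ) [Fact p.Prime] :
    Nonempty (ℍ[ℚ_[p], -3, 5] ≃ₐ[ℚ_[p]] Matrix (Fin 2) (Fin 2) ℚ_[p]) ↔ p ≠ 3 ∧ p ≠ 5 := by
  refine ⟨fun ⟨e⟩ => ⟨?_, ?_⟩, fun ⟨h3, h5⟩ => ?_⟩
  · rintro rfl
    exact isEmpty_algEquiv_matrix_padic_three.false e
  · rintro rfl
    exact isEmpty_algEquiv_matrix_padic_five.false e
  · obtain ⟨x, y, h⟩ := Padic.exists_sq_add_three_mul_sq_eq_five h3 h5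
    exact QuaternionAlgebra.nonempty_algEquiv_matrix_of_sq_sub_mul_sq_eq (x := x) (y := y)
      two_ne_zero (by norm_num) (by norm_num) (by linear_combination h)
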